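/- arXiv:2103.00078 — 4 statements merged into one kernel-verified Lean document; each statement's English description precedes it below -/
import Mathlib

section
/- Let F : F_2^n → F_2^m be a quadratic function and a ∈ F_2^n be nonzero. Then for every b ∈ F_2^m, δ_F(a,b) := #{x : F(x+a)+F(x)=b} is either 0 or equal to 2^{n-r}, where r = rank(Jlin_F(a)); moreover, the number of b ∈ F_2^m with δ_F(a,b) = 2^{n-r} is exactly 2^r. -/
open Matrix

/-- `F : F_2^n → F_2^m` is quadratic: each coordinate is the evaluation of a
polynomial of total degree at most 2 (equivalently, its ANF has degree ≤ 2). -/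
def IsQuadratic {n m : ℕ} (F : (Fin n → ZMod 2) → (Fin m → ZMod 2)) : Prop :=
  ∀ i : Fin m, ∃ p : MvPolynomial (Fin n) (ZMod 2),
    p.totalDegree ≤ 2 ∧ ∀ x, F x i = MvPolynomial.eval x p

/-- Linear part of the Jacobian: entries `Δ_{e_j}F_i(x) + Δ_{e_j}F_i(0)`. -/
def Jlin {n m : ℕ} (F : (Fin n → ZMod 2) → (Fin m → ZMod 2))
    (x : Fin n → ZMod 2) : Matrix (Fin m) (Fin n) (ZMod 2) :=
  Matrix.of fun i j =>
    F (x + Pi.single j 1) i + F x i + F (Pi.single j 1) i + F 0 i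

/-- DDT entry `δ_F(a,b) = #{x : F(x+a)+F(x)=b}`. -/
def ddt {n m : ℕ} (F : (Fin n → ZMod 2) → (Fin m → ZMod 2))
    (a : Fin n → ZMod 2) (b : Fin m → ZMod 2) : ℕ :=
  (Finset.univ.filter fun x => F (x + a) + F x = b).card

/-!
Over `𝔽₂` a polynomial of degree at most two has vanishing third differences, so for fixed `a`
the second difference `x ↦ F (a + x) + F a + F x + F 0` is additive, hence linear, and its matrix
is `Jlin F a`. Since `F (x + a) + F x = b` says exactly that this linear map sends `x` to
`b + F a + F 0`, each row of the DDT counts the solutions of a linear system: a coset of the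
kernel, of size `2 ^ (n - r)`, or nothing, and the right-hand sides that are solvable form a
translate of the image, of size `2 ^ r`.
-/

open Finset MvPolynomial

section ThirdDiff

variable {V R : Type*} [AddCommMonoid V] [AddCommMonoid R]

/-- `Δ_u Δ_v Δ_w f (0)`, with the signs dropped: it is only used in characteristic two. -/
def thirdDiff (f : V → R) (u v w : V) : R :=
  f (u + v + w) + f (u + v) + f (u + w) + f (v + w) + f u + f v + f w + f 0

theorem thirdDiff_sum {ι : Type*} (s : Finset ι) (f : ι → V → R) (u v w : V) :
    thirdDiff (fun x => ∑ d ∈ s, f d x) u v w = ∑ d ∈ s, thirdDiff (f d) u v w := by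
  simp only [thirdDiff, sum_add_distrib]

theorem thirdDiff_const_mul {R : Type*} [Semiring R] (c : R) (f : V → R) (u v w : V) :
    thirdDiff (fun x => c * f x) u v w = c * thirdDiff f u v w := by
  simp only [thirdDiff, mul_add]

end ThirdDiff

theorem ZMod.two_pow_eq_self (z : ZMod 2) {k : ℕ} (hk : k ≠ 0) : z ^ k = z := by
  induction k with
  | zero => exact absurd rfl hk
  | succ k ih =>
    rcases eq_or_ne k 0 with rfl | hk
    · exact pow_one z
    · rw [pow_succ, ih hk, ← sq, ZMod.pow_card]

theorem eval_monomial_zmod_two {σ : Type*} (x : σ → ZMod 2) (d : σ →₀ ℕ) (c : ZMod 2) :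
    eval x (monomial d c) = c * ∏ i ∈ d.support, x i := by
  rw [eval_monomial, Finsupp.prod]
  exact congrArg _ <| prod_congr rfl fun i hi =>
    ZMod.two_pow_eq_self _ (Finsupp.mem_support_iff.mp hi)

theorem thirdDiff_prod_eq_zero {σ : Type*} {s : Finset σ} (hs : #s ≤ 2)
    (u v w : σ → ZMod 2) :
    thirdDiff (fun x => ∏ i ∈ s, x i) u v w = 0 := by
  classical
  obtain hs | hs | hs : #s = 0 ∨ #s = 1 ∨ #s = 2 := by omega
  · simp only [thirdDiff, card_eq_zero.mp hs, prod_empty]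
    decide
  · obtain ⟨i, rfl⟩ := card_eq_one.mp hs
    simp only [thirdDiff, prod_singleton, Pi.add_apply, Pi.zero_apply]
    grind
  · obtain ⟨i, j, hij, rfl⟩ := card_eq_two.mp hs
    simp only [thirdDiff, prod_pair hij, Pi.add_apply, Pi.zero_apply]
    grind

theorem thirdDiff_eval_eq_zero {σ : Type*} {p : MvPolynomial σ (ZMod 2)}
    (hp : p.totalDegree ≤ 2) (u v w : σ → ZMod 2) : thirdDiff (fun x => eval x p) u v w = 0 := by
  conv in eval _ p => rw [p.as_sum, map_sum]
  simp only [thirdDiff_sum, eval_monomial_zmod_two, thirdDiff_const_mul]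
  refine sum_eq_zero fun d hd => ?_
  have hd : #d.support ≤ 2 := by
    refine le_trans ?_ ((le_totalDegree hd).trans hp)
    simpa [Finsupp.sum] using card_nsmul_le_sum d.support d 1 fun i hi =>
      Nat.one_le_iff_ne_zero.mpr (Finsupp.mem_support_iff.mp hi)
  rw [thirdDiff_prod_eq_zero hd, mul_zero]

section SecondDiff

variable {V W : Type*} [AddCommGroup V] [AddCommGroup W]

def secondDiff (F : V → W) (a x : V) : W := F (a + x) + F a + F x + F 0

theorem add_eq_iff_secondDiff_eq (F : V → W) (a x : V) (b : W) :
    F (x + a) + F x = b ↔ secondDiff F a x = b + (F a + F 0) := by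
  rw [secondDiff, add_comm a x, ← add_left_inj (F a + F 0)]
  abel_nf

end SecondDiff

section Quadratic

variable {n m : ℕ}

theorem ddt_eq_card_secondDiff_eq (F : (Fin n → ZMod 2) → (Fin m → ZMod 2))
    (a : Fin n → ZMod 2) (b : Fin m → ZMod 2) :
    ddt F a b = #{x | secondDiff F a x = b + (F a + F 0)} :=
  congrArg card (filter_congr fun x _ => add_eq_iff_secondDiff_eq F a x b)

theorem IsQuadratic.secondDiff_add {F : (Fin n → ZMod 2) → (Fin m → ZMod 2)}
    (hF : IsQuadratic F) (a x y : Fin n → ZMod 2) :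
    secondDiff F a (x + y) = secondDiff F a x + secondDiff F a y := by
  funext i
  obtain ⟨p, hp, hFp⟩ := hF i
  have h := thirdDiff_eval_eq_zero hp a x y
  simp only [thirdDiff, ← hFp] at h
  simp only [secondDiff, Pi.add_apply, ← add_assoc]
  grind

theorem IsQuadratic.secondDiff_eq_mulVec {F : (Fin n → ZMod 2) → (Fin m → ZMod 2)}
    (hF : IsQuadratic F) (a x : Fin n → ZMod 2) : secondDiff F a x = Jlin F a *ᵥ x := by
  let L := (AddMonoidHom.mk' (secondDiff F a) (hF.secondDiff_add a)).toZModLinearMap 2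
  have hL : LinearMap.toMatrix' L = Jlin F a := rfl
  rw [← hL, ← Matrix.toLin'_apply, Matrix.toLin'_toMatrix']
  rfl

end Quadratic

section Fiber

variable {K ι κ : Type*} [Field K] [Fintype ι] (M : Matrix κ ι K)

theorem Matrix.finrank_ker_mulVecLin :
    Module.finrank K (LinearMap.ker M.mulVecLin) = Fintype.card ι - M.rank := by
  have := LinearMap.finrank_range_add_finrank_ker M.mulVecLin
  rw [Module.finrank_fintype_fun_eq_card] at this
  rw [Matrix.rank]
  omega

variable [Fintype K]

theorem Matrix.card_range_mulVec : Nat.card (Set.range M.mulVec) = Fintype.card K ^ M.rank := by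
  rw [← M.coe_mulVecLin, ← LinearMap.coe_range, SetLike.coe_sort_coe,
    Module.natCard_eq_pow_finrank (K := K), Nat.card_eq_fintype_card, Matrix.rank]

variable [DecidableEq K] [DecidableEq ι] [Fintype κ]

theorem Matrix.card_filter_mulVec_eq_zero :
    #{x | M *ᵥ x = 0} = Fintype.card K ^ (Fintype.card ι - M.rank) := by
  classical
  rw [← M.finrank_ker_mulVecLin, ← Module.card_eq_pow_finrank, Fintype.card_subtype]
  simp [LinearMap.mem_ker]

theorem Matrix.card_filter_mulVec_eq (b : κ → K) :
    #{x | M *ᵥ x = b} =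
      if b ∈ Set.range M.mulVec then Fintype.card K ^ (Fintype.card ι - M.rank) else 0 := by
  split_ifs with hb
  · exact (AddMonoidHom.card_fiber_eq_of_mem_range M.mulVecLin hb ⟨0, M.mulVec_zero⟩).trans
      M.card_filter_mulVec_eq_zero
  · exact card_eq_zero.mpr (filter_eq_empty_iff.mpr fun x _ hx => hb ⟨x, hx⟩)

end Fiber

theorem ddt_row_values_of_quadratic_general {n m : ℕ}
    (F : (Fin n → ZMod 2) → (Fin m → ZMod 2)) (hF : IsQuadratic F)
    (a : Fin n → ZMod 2) :
    (∀ b : Fin m → ZMod 2,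
        ddt F a b = 0 ∨ ddt F a b = 2 ^ (n - (Jlin F a).rank)) ∧
    Nat.card {b : Fin m → ZMod 2 | ddt F a b = 2 ^ (n - (Jlin F a).rank)}
      = 2 ^ (Jlin F a).rank := by
  have hddt (b : Fin m → ZMod 2) : ddt F a b =
      if b + (F a + F 0) ∈ Set.range (Jlin F a).mulVec then 2 ^ (n - (Jlin F a).rank) else 0 := by
    simp only [ddt_eq_card_secondDiff_eq, hF.secondDiff_eq_mulVec, Matrix.card_filter_mulVec_eq,
      ZMod.card, Fintype.card_fin]
  refine ⟨fun b => ?_, ?_⟩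
  · rw [hddt]
    split_ifs <;> simp
  · have hgood : {b | ddt F a b = 2 ^ (n - (Jlin F a).rank)} =
        (· + (F a + F 0)) ⁻¹' Set.range (Jlin F a).mulVec := by
      ext b
      rw [Set.mem_ofPred_eq, Set.mem_preimage, hddt]
      split_ifs with hb
      · simp [hb]
      · simpa [hb] using (pow_pos two_pos _).ne
    rw [hgood, Nat.card_preimage_of_injective (add_left_injective _)
      ((add_right_surjective (F a + F 0)).range_eq ▸ Set.subset_univ _),
      Matrix.card_range_mulVec, ZMod.card]

theorem ddt_row_values_of_quadratic {n m : ℕ}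
    (F : (Fin n → ZMod 2) → (Fin m → ZMod 2)) (hF : IsQuadratic F)
    (a : Fin n → ZMod 2) (ha : a ≠ 0) :
    (∀ b : Fin m → ZMod 2,
        ddt F a b = 0 ∨ ddt F a b = 2 ^ (n - (Jlin F a).rank)) ∧
    Nat.card {b : Fin m → ZMod 2 | ddt F a b = 2 ^ (n - (Jlin F a).rank)}
      = 2 ^ (Jlin F a).rank :=
  ddt_row_values_of_quadratic_general F hF a
end

section
/- Let F : F_2^n → F_2^m be a quadratic function with n ≥ 1. Then F is APN (i.e., δ_F(a,b) ≤ 2 for all nonzero a and all b) if and only if Jlin_F(x) has rank n−1 for every nonzero x ∈ F_2^n. -/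
open Matrix

/-!
The second differences of a quadratic `F` do not depend on the base point, so
`x ↦ F (a + x) + F a + F x + F 0` is linear; its matrix is `Jlin F a` and it vanishes at `a`.
Since `F (x + a) + F x = b` is an affine equation for this linear map, `δ_F(a, b)` is either `0`
or the size `2 ^ k` of its kernel. Hence `δ_F(a, ·) ≤ 2` iff the kernel is `{0, a}`,
i.e. iff `Jlin F a` has rank `n - 1`.
-/

open Finset

lemma Finsupp.eq_zero_or_single_or_add_single {σ : Type*} {d : σ →₀ ℕ}
    (hd : (d.sum fun _ e => e) ≤ 2) :
    d = 0 ∨ (∃ i, d = single i 1) ∨ ∃ i j, d = single i 1 + single j 1 := by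
  classical
  obtain ⟨s, rfl⟩ := Multiset.toFinsupp.surjective d
  have hs : Multiset.card s ≤ 2 := by
    rwa [← Multiset.toFinsupp_toMultiset s, Finsupp.card_toMultiset]
  interval_cases h : Multiset.card s
  · simp_all
  · obtain ⟨i, rfl⟩ := Multiset.card_eq_one.mp h
    exact Or.inr (Or.inl ⟨i, by simp⟩)
  · obtain ⟨i, j, rfl⟩ := Multiset.card_eq_two.mp h
    refine Or.inr (Or.inr ⟨i, j, ?_⟩)
    simp [Multiset.insert_eq_cons, ← Multiset.singleton_add, Multiset.toFinsupp_add]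

namespace MvPolynomial

variable {σ R : Type*} [CommRing R]

lemma eval_second_diff_monomial {d : σ →₀ ℕ} (hd : (d.sum fun _ e => e) ≤ 2) (c : R)
    (x a b : σ → R) :
    eval (x + a + b) (monomial d c) - eval (x + a) (monomial d c) - eval (x + b) (monomial d c)
        + eval x (monomial d c)
      = eval (a + b) (monomial d c) - eval a (monomial d c) - eval b (monomial d c)
        + eval 0 (monomial d c) := by
  rcases Finsupp.eq_zero_or_single_or_add_single hd with rfl | ⟨i, rfl⟩ | ⟨i, j, rfl⟩ <;>
    simp only [monomial_zero', monomial_add_single, ← C_mul_X_pow_eq_monomial, pow_one, map_mul,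
      eval_C, eval_X, Pi.add_apply, Pi.zero_apply] <;> ring

lemma eval_second_diff_of_totalDegree_le_two {p : MvPolynomial σ R} (hp : p.totalDegree ≤ 2)
    (x a b : σ → R) :
    eval (x + a + b) p - eval (x + a) p - eval (x + b) p + eval x p
      = eval (a + b) p - eval a p - eval b p + eval 0 p := by
  rw [p.as_sum]
  simp only [map_sum, ← Finset.sum_sub_distrib, ← Finset.sum_add_distrib]
  exact Finset.sum_congr rfl fun d hd =>
    eval_second_diff_monomial ((le_totalDegree hd).trans hp) _ x a b

end MvPolynomial

lemma card_filter_apply_eq_le_card_filter_apply_eq_zero {G H M : Type*} [AddGroup G]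
    [AddGroup H] [FunLike M G H] [AddMonoidHomClass M G H] [Fintype G] [DecidableEq H]
    (f : M) (c : H) :
    #{x | f x = c} ≤ #{x | f x = 0} := by
  obtain h | ⟨x₀, hx₀⟩ := (univ.filter fun x => f x = c).eq_empty_or_nonempty
  · simp [h]
  refine card_le_card_of_injOn (· - x₀) (fun x hx => ?_) fun x _ y _ h => sub_left_injective h
  simp_all

lemma LinearMap.card_filter_apply_eq_zero {K V W : Type*} [Field K] [Fintype K]
    [AddCommGroup V] [Module K V] [Fintype V] [AddCommGroup W] [Module K W] [DecidableEq W]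
    (L : V →ₗ[K] W) : #{x | L x = 0} = Fintype.card K ^ Module.finrank K (LinearMap.ker L) := by
  classical
  rw [← Module.card_eq_pow_finrank, Fintype.card_subtype]
  simp [LinearMap.mem_ker]

section Polar

variable {V W : Type*} [AddCommGroup V] [AddCommGroup W]

def HasConstSecondDiff (F : V → W) : Prop :=
  ∀ x a b, F (x + a + b) - F (x + a) - F (x + b) + F x = F (a + b) - F a - F b + F 0

def polar (F : V → W) (a x : V) : W := F (a + x) - F a - F x + F 0

variable {F : V → W}

lemma HasConstSecondDiff.polar_add (hF : HasConstSecondDiff F) (a u v : V) :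
    polar F a (u + v) = polar F a u + polar F a v := by
  have := hF a u v
  simp only [polar, ← add_assoc]
  linear_combination (norm := module) this

variable [Module (ZMod 2) W]

lemma polar_eq_add_iff (a x : V) (b : W) :
    polar F a x = b + (F a + F 0) ↔ F (x + a) + F x = b := by
  rw [show polar F a x = F (x + a) + F x + (F a + F 0) by
    simp only [polar, ZModModule.sub_eq_add, add_comm a x]; abel, add_left_inj]

variable [Module (ZMod 2) V]

def HasConstSecondDiff.polarLinearMap (hF : HasConstSecondDiff F) (a : V) : V →ₗ[ZMod 2] W :=
  (AddMonoidHom.mk' (polar F a) (hF.polar_add a)).toZModLinearMap 2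

@[simp]
lemma HasConstSecondDiff.polarLinearMap_apply (hF : HasConstSecondDiff F) (a x : V) :
    hF.polarLinearMap a x = polar F a x := rfl

lemma polar_self (a : V) : polar F a a = 0 := by
  rw [polar, ZModModule.add_self a, sub_sub, ZModModule.add_self, sub_zero, ZModModule.add_self]

lemma HasConstSecondDiff.one_le_finrank_ker_polarLinearMap [Module.Finite (ZMod 2) V]
    (hF : HasConstSecondDiff F) {a : V} (ha : a ≠ 0) :
    1 ≤ Module.finrank (ZMod 2) (LinearMap.ker (hF.polarLinearMap a)) :=
  Submodule.one_le_finrank_iff.mpr <| (Submodule.ne_bot_iff _).mpr ⟨a, polar_self a, ha⟩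

end Polar

section Boolean

variable {n m : ℕ} {F : (Fin n → ZMod 2) → (Fin m → ZMod 2)}

lemma IsQuadratic.hasConstSecondDiff (hF : IsQuadratic F) : HasConstSecondDiff F := by
  intro x a b
  funext i
  obtain ⟨p, hp, hFp⟩ := hF i
  simpa only [Pi.add_apply, Pi.sub_apply, hFp] using
    MvPolynomial.eval_second_diff_of_totalDegree_le_two hp x a b

lemma ddt_eq_card_polar (a : Fin n → ZMod 2) (b : Fin m → ZMod 2) :
    ddt F a b = #{x | polar F a x = b + (F a + F 0)} := by
  simp only [ddt, polar_eq_add_iff]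

lemma HasConstSecondDiff.jlin_eq_toMatrix' (hF : HasConstSecondDiff F) (a : Fin n → ZMod 2) :
    Jlin F a = LinearMap.toMatrix' (hF.polarLinearMap a) := by
  ext i j
  simp [Jlin, LinearMap.toMatrix'_apply, polar, ZModModule.sub_eq_add]

lemma HasConstSecondDiff.rank_jlin_add_finrank_ker (hF : HasConstSecondDiff F)
    (a : Fin n → ZMod 2) :
    (Jlin F a).rank + Module.finrank (ZMod 2) (LinearMap.ker (hF.polarLinearMap a)) = n := by
  rw [hF.jlin_eq_toMatrix', Matrix.rank, ← Matrix.toLin'_apply', Matrix.toLin'_toMatrix',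
    LinearMap.finrank_range_add_finrank_ker, Module.finrank_fin_fun]

lemma HasConstSecondDiff.forall_ddt_le_two_iff (hF : HasConstSecondDiff F)
    {a : Fin n → ZMod 2} (ha : a ≠ 0) :
    (∀ b, ddt F a b ≤ 2) ↔ Module.finrank (ZMod 2) (LinearMap.ker (hF.polarLinearMap a)) = 1 := by
  have hk := hF.one_le_finrank_ker_polarLinearMap ha
  set L := hF.polarLinearMap a
  calc (∀ b, ddt F a b ≤ 2) ↔ ∀ c, #{x | L x = c} ≤ 2 := by
        simp only [ddt_eq_card_polar, L, HasConstSecondDiff.polarLinearMap_apply]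
        exact ((add_right_surjective (F a + F 0)).forall
          (p := fun c => #{x | polar F a x = c} ≤ 2)).symm
    _ ↔ #{x | L x = 0} ≤ 2 :=
        ⟨fun h => h 0, fun h c => (card_filter_apply_eq_le_card_filter_apply_eq_zero L c).trans h⟩
    _ ↔ 2 ^ Module.finrank (ZMod 2) (LinearMap.ker L) ≤ 2 ^ 1 := by
        rw [L.card_filter_apply_eq_zero, ZMod.card, pow_one]
    _ ↔ _ := by rw [Nat.pow_le_pow_iff_right (by norm_num)]; omega

end Boolean

theorem apn_iff_jlin_rank_general {n m : ℕ}
    (F : (Fin n → ZMod 2) → (Fin m → ZMod 2)) (hF : IsQuadratic F) :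
    (∀ a : Fin n → ZMod 2, a ≠ 0 → ∀ b : Fin m → ZMod 2, ddt F a b ≤ 2) ↔
      (∀ x : Fin n → ZMod 2, x ≠ 0 → (Jlin F x).rank = n - 1) := by
  have hF := hF.hasConstSecondDiff
  refine forall_congr' fun a => imp_congr_right fun ha => ?_
  have hsum := hF.rank_jlin_add_finrank_ker a
  have hk := hF.one_le_finrank_ker_polarLinearMap ha
  rw [hF.forall_ddt_le_two_iff ha]
  omega

theorem apn_iff_jlin_rank {n m : ℕ} (hn : 1 ≤ n)
    (F : (Fin n → ZMod 2) → (Fin m → ZMod 2)) (hF : IsQuadratic F) :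
    (∀ a : Fin n → ZMod 2, a ≠ 0 → ∀ b : Fin m → ZMod 2, ddt F a b ≤ 2) ↔
      (∀ x : Fin n → ZMod 2, x ≠ 0 → (Jlin F x).rank = n - 1) :=
  apn_iff_jlin_rank_general F hF
end

section
/- Let M, N ∈ F_2^{m×n} be matrices of the same rank r. Then the solution space of the linear system X·M = N·Y in unknowns (X,Y) ∈ F_2^{m×m} × F_2^{n×n} is a linear subspace of dimension at least m²+n² − r(m+n−r); equivalently, the system has rank at most r(m+n−r). -/
open Matrix

/-! The solution space is the kernel of `(X, Y) ↦ X * M - N * Y`, whose range is the sum of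
`{X * M}` and `{N * Y}`, of dimensions `m r` and `n r`. Both contain every `N * Z * M`, and
among these are the `r²` outer products `vecMulVec (u i) (v j)`, where `u` is a basis of the
column space of `N` and `v` one of the row space of `M`; they are linearly independent, since the
outer product is the tensor product. So the range has dimension at most `r (m + n) - r²`, and
rank–nullity gives the bound. -/

open Module LinearMap

section

variable {K : Type*} [Field K]

theorem LinearMap.finrank_range_compLeft {V W : Type*} [AddCommGroup V] [Module K V]
    [AddCommGroup W] [Module K W] [FiniteDimensional K W] (f : V →ₗ[K] W) (ι : Type*)
    [Fintype ι] :
    finrank K (range (f.compLeft ι)) = Fintype.card ι * finrank K (range f) := by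
  have hsurj : range (f.rangeRestrict.compLeft ι) = ⊤ := by
    rw [range_compLeft, range_rangeRestrict, Submodule.pi_top]
  have hinj : Function.Injective ((range f).subtype.compLeft ι) :=
    fun g g' h => funext fun i => Subtype.ext (congrFun h i)
  calc finrank K (range (f.compLeft ι))
      = finrank K (range ((range f).subtype.compLeft ι ∘ₗ f.rangeRestrict.compLeft ι)) := rfl
    _ = finrank K (ι → range f) := by
      rw [range_comp_of_range_eq_top _ hsurj, finrank_range_of_inj hinj]
    _ = Fintype.card ι * finrank K (range f) := by simp [Module.finrank_pi_fintype]

namespace Matrix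

variable {l m n o : Type*}

theorem rank_eq_finrank_range_vecMulLinear [Fintype m] [Fintype n] (A : Matrix m n K) :
    A.rank = finrank K (range A.vecMulLinear) := by
  rw [← rank_transpose, rank, mulVecLin_transpose]

theorem finrank_range_mulRightLinearMap [Fintype l] [Fintype m] [Fintype n] (A : Matrix m n K) :
    finrank K (range (mulRightLinearMap l K A)) = Fintype.card l * A.rank := by
  rw [rank_eq_finrank_range_vecMulLinear, ← LinearMap.finrank_range_compLeft]
  rfl

theorem finrank_range_mulLeftLinearMap [Fintype l] [Fintype m] [Fintype n] (A : Matrix l m K) :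
    finrank K (range (mulLeftLinearMap n K A)) = Fintype.card n * A.rank := by
  have h : mulLeftLinearMap n K A = (transposeLinearEquiv n l K K).toLinearMap ∘ₗ
      mulRightLinearMap n K Aᵀ ∘ₗ (transposeLinearEquiv m n K K).toLinearMap := by
    ext Y : 1
    simp [transpose_mul]
  rw [h, range_comp, range_comp_of_range_eq_top _ (LinearEquiv.range _),
    LinearEquiv.finrank_map_eq, finrank_range_mulRightLinearMap, rank_transpose]

theorem linearIndependent_vecMulVec [Fintype m] {ι κ : Type*}
    {u : ι → m → K} {v : κ → n → K}
    (hu : LinearIndependent K u) (hv : LinearIndependent K v) :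
    LinearIndependent K fun p : ι × κ => vecMulVec (u p.1) (v p.2) := by
  classical
  -- `piScalarRight` sends `v j ⊗ u i` to `fun a => u i a • v j`, i.e. `vecMulVec (u i) (v j)`.
  have h := ((hv.tmul_of_isDomain hu).comp Prod.swap Prod.swap_injective).map'
    ((ofLinearEquiv K).toLinearMap ∘ₗ (TensorProduct.piScalarRight K K (n → K) m).toLinearMap)
    (by simp)
  exact h

theorem rank_mul_rank_le_finrank_range_mul_mul [Fintype l] [Fintype m] [Fintype n] [Fintype o]
    (N : Matrix l m K) (M : Matrix n o K) :
    N.rank * M.rank ≤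
      finrank K (range (mulLeftLinearMap o K N ∘ₗ mulRightLinearMap m K M)) := by
  let bu := finBasis K (range N.mulVecLin)
  let bv := finBasis K (range M.vecMulLinear)
  have hu : LinearIndependent K fun i => (bu i : l → K) :=
    bu.linearIndependent.map' (range N.mulVecLin).subtype (Submodule.ker_subtype _)
  have hv : LinearIndependent K fun j => (bv j : o → K) :=
    bv.linearIndependent.map' (range M.vecMulLinear).subtype (Submodule.ker_subtype _)
  have hmem : ∀ i j, vecMulVec (bu i : l → K) (bv j) ∈
      range (mulLeftLinearMap o K N ∘ₗ mulRightLinearMap m K M) := by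
    intro i j
    obtain ⟨a, ha⟩ := (bu i).2
    obtain ⟨b, hb⟩ := (bv j).2
    refine ⟨vecMulVec a b, ?_⟩
    change N * (vecMulVec a b * M) = _
    rw [vecMulVec_mul, mul_vecMulVec]
    exact congr_arg₂ vecMulVec ha hb
  calc N.rank * M.rank
      = finrank K (Submodule.span K (Set.range fun p : Fin (finrank K (range N.mulVecLin)) ×
          Fin (finrank K (range M.vecMulLinear)) =>
            vecMulVec (bu p.1 : l → K) (bv p.2 : o → K))) := by
        rw [finrank_span_eq_card (linearIndependent_vecMulVec hu hv),
          rank_eq_finrank_range_vecMulLinear M]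
        simp [rank]
    _ ≤ _ := Submodule.finrank_mono <|
        Submodule.span_le.mpr <| Set.range_subset_iff.mpr fun p => hmem p.1 p.2

section mulSubMul

variable {R : Type*} [CommRing R] [Fintype m] [Fintype n]

def mulSubMulLinearMap (M N : Matrix m n R) : Matrix m m R × Matrix n n R →ₗ[R] Matrix m n R :=
  (mulRightLinearMap m R M).coprod (-mulLeftLinearMap n R N)

theorem mulSubMulLinearMap_apply (M N : Matrix m n R) (p : Matrix m m R × Matrix n n R) :
    mulSubMulLinearMap M N p = p.1 * M - N * p.2 := by
  simp [mulSubMulLinearMap, sub_eq_add_neg]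

theorem range_mulSubMulLinearMap (M N : Matrix m n R) :
    range (mulSubMulLinearMap M N) =
      range (mulRightLinearMap m R M) ⊔ range (mulLeftLinearMap n R N) := by
  rw [mulSubMulLinearMap, range_coprod, range_neg]

end mulSubMul

theorem finrank_range_mulSubMulLinearMap_add_le [Fintype m] [Fintype n] (M N : Matrix m n K) :
    finrank K (range (mulSubMulLinearMap M N)) + N.rank * M.rank ≤
      Fintype.card m * M.rank + Fintype.card n * N.rank := by
  set A := range (mulRightLinearMap m K M)
  set B := range (mulLeftLinearMap n K N)
  have hNZM : range (mulLeftLinearMap n K N ∘ₗ mulRightLinearMap n K M) ≤ A ⊓ B := by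
    rintro _ ⟨Z, rfl⟩
    exact ⟨⟨N * Z, Matrix.mul_assoc N Z M⟩, ⟨Z * M, rfl⟩⟩
  calc finrank K (range (mulSubMulLinearMap M N)) + N.rank * M.rank
      ≤ finrank K ↥(A ⊔ B) + finrank K ↥(A ⊓ B) := by
        rw [range_mulSubMulLinearMap]
        gcongr
        exact (rank_mul_rank_le_finrank_range_mul_mul N M).trans (Submodule.finrank_mono hNZM)
    _ = finrank K A + finrank K B := Submodule.finrank_sup_add_finrank_inf_eq A B
    _ = Fintype.card m * M.rank + Fintype.card n * N.rank := by
        rw [finrank_range_mulRightLinearMap, finrank_range_mulLeftLinearMap]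

end Matrix

end

theorem solution_space_dimension_lower_bound {m n : ℕ}
    (M N : Matrix (Fin m) (Fin n) (ZMod 2)) (r : ℕ)
    (hM : M.rank = r) (hN : N.rank = r) :
    ∃ W : Submodule (ZMod 2)
        (Matrix (Fin m) (Fin m) (ZMod 2) × Matrix (Fin n) (Fin n) (ZMod 2)),
      (W : Set (Matrix (Fin m) (Fin m) (ZMod 2) × Matrix (Fin n) (Fin n) (ZMod 2)))
          = {p | p.1 * M = N * p.2} ∧
      m ^ 2 + n ^ 2 - r * (m + n - r) ≤ Module.finrank (ZMod 2) W := by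
  refine ⟨ker (mulSubMulLinearMap M N), ?_, ?_⟩
  · ext p
    simp [mulSubMulLinearMap_apply, sub_eq_zero]
  have hnullity := finrank_range_add_finrank_ker (mulSubMulLinearMap M N)
  have hbound := finrank_range_mulSubMulLinearMap_add_le M N
  simp only [finrank_prod, finrank_matrix, Fintype.card_fin, finrank_self] at hnullity hbound
  rw [hM, hN] at hbound
  obtain ⟨d, rfl⟩ := Nat.exists_eq_add_of_le (hM ▸ M.rank_le_height : r ≤ m)
  rw [show r + d + n - r = d + n by omega, tsub_le_iff_right]
  nlinarith
end

section
/- Let F : F_2^n → F_2^m be bent, i.e., every Walsh coefficient W_F(a,b) with b ≠ 0 equals ±2^{n/2}. Then δ_F(a,b) = 2^{n−m} for all nonzero a ∈ F_2^n and all b ∈ F_2^m; in particular δ(F) = 2^{n−m}, achieving the lower bound δ(F) ≥ 2^{n−m} (perfect nonlinearity). -/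
open Matrix

/-- Walsh transform of F at (a,b). -/
def walsh {n m : ℕ} (F : (Fin n → ZMod 2) → (Fin m → ZMod 2))
    (a : Fin n → ZMod 2) (b : Fin m → ZMod 2) : ℤ :=
  ∑ x : Fin n → ZMod 2,
    (-1 : ℤ) ^ (dotProduct a x + dotProduct b (F x)).val

/-!
Squaring a Walsh coefficient and substituting `y = x + z` in the double sum gives
`W_F(u,v)² = ∑_z (-1)^{u·z} W_{D_z F}(0,v)`, where `D_z F x = F (x + z) + F x`; by orthogonality
of characters, `∑_u (-1)^{u·a} W_F(u,v)² = 2ⁿ W_{D_a F}(0,v)`. Bentness makes `W_F(u,v)²`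
independent of `u` for `v ≠ 0`, and `∑_u (-1)^{u·a} = 0` for `a ≠ 0`, so every nonzero component
`v·D_a F` is balanced. Fourier inversion on the fibres of `D_a F` then gives
`2^m δ_F(a,b) = W_{D_a F}(0,0) = 2ⁿ`.
-/

open Finset

def signChar : AddChar (ZMod 2) ℤ where
  toFun c := (-1) ^ c.val
  map_zero_eq_one' := rfl
  map_add_eq_mul' := by decide

lemma signChar_mul_self (c : ZMod 2) : signChar c * signChar c = 1 := by
  rw [← AddChar.map_add_eq_mul, CharTwo.add_self_eq_zero, AddChar.map_zero_eq_one]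

lemma zmodTwo_pi_add_eq_zero_iff {ι : Type*} {x y : ι → ZMod 2} : x + y = 0 ↔ x = y := by
  rw [← eq_neg_iff_add_eq_zero, show -y = y from funext fun i => ZMod.neg_eq_self_mod_two (y i)]

def dotProductSignChar {ι : Type*} [Fintype ι] (x : ι → ZMod 2) : AddChar (ι → ZMod 2) ℤ where
  toFun u := signChar (u ⬝ᵥ x)
  map_zero_eq_one' := by rw [zero_dotProduct, AddChar.map_zero_eq_one]
  map_add_eq_mul' u w := by rw [add_dotProduct, AddChar.map_add_eq_mul]

lemma sum_signChar_dotProduct {ι : Type*} [Fintype ι] [DecidableEq ι] (x : ι → ZMod 2) :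
    ∑ u : ι → ZMod 2, signChar (u ⬝ᵥ x) = if x = 0 then 2 ^ Fintype.card ι else 0 := by
  split_ifs with hx
  · simp [hx, Fintype.card_pi]
  obtain ⟨j, hj⟩ := Function.ne_iff.1 hx
  refine (AddChar.sum_eq_zero_iff_ne_zero (ψ := dotProductSignChar x)).2 <|
    AddChar.ne_zero_iff.2 ⟨(Pi.single j 1 : ι → ZMod 2), ?_⟩
  show signChar ((Pi.single j 1 : ι → ZMod 2) ⬝ᵥ x) ≠ 1
  have hxj : x j = 1 := (by decide : ∀ c : ZMod 2, c ≠ 0 → c = 1) _ hj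
  rw [single_dotProduct, one_mul, hxj]
  decide

section Walsh

variable {n m : ℕ}

def discreteDeriv (F : (Fin n → ZMod 2) → (Fin m → ZMod 2)) (a : Fin n → ZMod 2) :
    (Fin n → ZMod 2) → (Fin m → ZMod 2) :=
  fun x => F (x + a) + F x

lemma walsh_eq_sum_signChar (F : (Fin n → ZMod 2) → (Fin m → ZMod 2))
    (a : Fin n → ZMod 2) (b : Fin m → ZMod 2) :
    walsh F a b = ∑ x, signChar (a ⬝ᵥ x) * signChar (b ⬝ᵥ F x) :=
  sum_congr rfl fun _ _ => signChar.map_add_eq_mul _ _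

lemma walsh_zero_left (F : (Fin n → ZMod 2) → (Fin m → ZMod 2)) (b : Fin m → ZMod 2) :
    walsh F 0 b = ∑ x, signChar (b ⬝ᵥ F x) := by
  simp [walsh_eq_sum_signChar]

lemma walsh_zero_zero (F : (Fin n → ZMod 2) → (Fin m → ZMod 2)) : walsh F 0 0 = 2 ^ n := by
  simp [walsh_zero_left]

lemma pow_mul_card_fiber_eq_sum_walsh (G : (Fin n → ZMod 2) → (Fin m → ZMod 2))
    (b : Fin m → ZMod 2) :
    2 ^ m * (#{x | G x = b} : ℤ) = ∑ v, signChar (v ⬝ᵥ b) * walsh G 0 v := by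
  have hfiber : ∀ x, ∑ v : Fin m → ZMod 2, signChar (v ⬝ᵥ (b + G x))
      = if G x = b then 2 ^ m else 0 := by
    intro x
    simp only [sum_signChar_dotProduct, zmodTwo_pi_add_eq_zero_iff, eq_comm, Fintype.card_fin]
  simp only [walsh_zero_left, mul_sum, ← AddChar.map_add_eq_mul, ← dotProduct_add]
  rw [sum_comm, sum_congr rfl fun x _ => hfiber x, ← sum_filter, sum_const, nsmul_eq_mul, mul_comm]

lemma walsh_sq_eq_sum_walsh_discreteDeriv (F : (Fin n → ZMod 2) → (Fin m → ZMod 2))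
    (u : Fin n → ZMod 2) (v : Fin m → ZMod 2) :
    walsh F u v ^ 2 = ∑ z, signChar (u ⬝ᵥ z) * walsh (discreteDeriv F z) 0 v := by
  rw [sq, walsh_eq_sum_signChar, sum_mul_sum]
  simp only [walsh_zero_left, mul_sum]
  conv_rhs => rw [sum_comm]
  refine sum_congr rfl fun x _ => ?_
  rw [← Equiv.sum_comp (Equiv.addLeft x)]
  refine sum_congr rfl fun z _ => ?_
  simp only [Equiv.coe_addLeft, discreteDeriv, dotProduct_add, AddChar.map_add_eq_mul]
  linear_combination (signChar (u ⬝ᵥ z) * signChar (v ⬝ᵥ F (x + z)) * signChar (v ⬝ᵥ F x)) *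
    signChar_mul_self (u ⬝ᵥ x)

lemma sum_signChar_mul_walsh_sq (F : (Fin n → ZMod 2) → (Fin m → ZMod 2))
    (a : Fin n → ZMod 2) (v : Fin m → ZMod 2) :
    ∑ u, signChar (u ⬝ᵥ a) * walsh F u v ^ 2 = 2 ^ n * walsh (discreteDeriv F a) 0 v := by
  simp only [walsh_sq_eq_sum_walsh_discreteDeriv]
  calc ∑ u, signChar (u ⬝ᵥ a) * ∑ z, signChar (u ⬝ᵥ z) * walsh (discreteDeriv F z) 0 v
      = ∑ z, (∑ u, signChar (u ⬝ᵥ (a + z))) * walsh (discreteDeriv F z) 0 v := by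
        simp only [mul_sum, sum_mul, dotProduct_add, AddChar.map_add_eq_mul, mul_assoc]
        exact sum_comm
    _ = 2 ^ n * walsh (discreteDeriv F a) 0 v := by
        simp only [sum_signChar_dotProduct, zmodTwo_pi_add_eq_zero_iff, Fintype.card_fin, ite_mul,
          zero_mul, sum_ite_eq, mem_univ, if_true]

lemma walsh_discreteDeriv_eq_zero {F : (Fin n → ZMod 2) → (Fin m → ZMod 2)}
    {a : Fin n → ZMod 2} {v : Fin m → ZMod 2} {c : ℤ} (hW : ∀ u, walsh F u v ^ 2 = c)
    (ha : a ≠ 0) : walsh (discreteDeriv F a) 0 v = 0 := by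
  have h := sum_signChar_mul_walsh_sq F a v
  simp only [hW, ← sum_mul, sum_signChar_dotProduct, if_neg ha, zero_mul] at h
  exact (mul_eq_zero.1 h.symm).resolve_left (by positivity)

lemma two_pow_mul_ddt_eq_two_pow {F : (Fin n → ZMod 2) → (Fin m → ZMod 2)} {a : Fin n → ZMod 2}
    (hbal : ∀ v ≠ 0, walsh (discreteDeriv F a) 0 v = 0) (b : Fin m → ZMod 2) :
    2 ^ m * ddt F a b = 2 ^ n := by
  have h := pow_mul_card_fiber_eq_sum_walsh (discreteDeriv F a) b
  rw [sum_eq_single 0 (fun v _ hv => by rw [hbal v hv, mul_zero]) (by simp),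
    walsh_zero_zero, zero_dotProduct, AddChar.map_zero_eq_one, one_mul] at h
  exact_mod_cast h

end Walsh

lemma Nat.eq_pow_sub_of_pow_mul_eq {b m n d : ℕ} (hb : 1 < b) (h : b ^ m * d = b ^ n) :
    d = b ^ (n - m) := by
  have hmn : m ≤ n := (Nat.pow_dvd_pow_iff_le_right hb).1 (Dvd.intro d h)
  rw [← Nat.pow_div hmn (by omega), ← h, Nat.mul_div_cancel_left _ (by positivity)]

theorem bent_implies_perfect_nonlinear {n m : ℕ}
    (F : (Fin n → ZMod 2) → (Fin m → ZMod 2))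
    (hbent : ∀ (a : Fin n → ZMod 2) (b : Fin m → ZMod 2), b ≠ 0 →
      walsh F a b = 2 ^ (n / 2) ∨ walsh F a b = -(2 ^ (n / 2))) :
    ∀ a : Fin n → ZMod 2, a ≠ 0 → ∀ b : Fin m → ZMod 2,
      ddt F a b = 2 ^ (n - m) := by
  intro a ha b
  have hbal : ∀ v ≠ 0, walsh (discreteDeriv F a) 0 v = 0 := fun v hv =>
    walsh_discreteDeriv_eq_zero (c := (2 ^ (n / 2)) ^ 2)
      (fun u => (hbent u v hv).elim (fun h => by rw [h]) (fun h => by rw [h, neg_sq])) ha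
  exact Nat.eq_pow_sub_of_pow_mul_eq one_lt_two (two_pow_mul_ddt_eq_two_pow hbal b)
end
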